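/- arXiv:1506.01695 — 2 statements merged into one kernel-verified Lean document; each statement's English description precedes it below -/
import Mathlib

section
/- Structural isomorphism satisfies the exchange property: let T_g, T_h be parse trees rooted at ⊕ nodes with immediate significant descendants including g₁, g₂ and h₁, h₂ respectively; if T_{g₁} ≅^{π₁} T_{h₁}, T_{g₂} ≅^{π₂} T_{h₂}, and also T_{g₁} ≅^{π₃} T_{h₂} (with each πᵢ an isomorphism of the corresponding colored quotient graphs compatible with a common color map π), then T_{g₂} ≅^{π₁ π₃⁻¹ π₂} T_{h₁}, and π₁π₃⁻¹π₂ is an isomorphism from Q_{g₂} to Q_{h₁} compatible with π on colors. -/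
/-- A colored quotient graph: its vertices are labels (natural numbers),
it has an adjacency relation recording the join (`η`) operations, and a
coloring of labels recording the relabelling (`ρ`) operations. -/
structure CQGraph where
  verts : Finset ℕ
  adj : ℕ → ℕ → Prop
  color : ℕ → ℕ

/-- A parse tree (restricted to its `⊕`-skeleton): a leaf creates a vertex
with a label; a `⊕` node has a list of immediate significant descendants,
each together with the colored quotient graph of the `η`/`ρ` operations
on the path from the `⊕` node to that descendant. -/
inductive PTree (α : Type) where
  | leaf (v : α) (l : ℕ)
  | node (cs : List (CQGraph × PTree α))

/-- `e` is an isomorphism of the colored quotient graphs `Q` and `Q'`. -/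
def QIso (Q Q' : CQGraph) (e : ℕ ≃ ℕ) : Prop :=
  (∀ x, x ∈ Q.verts ↔ e x ∈ Q'.verts) ∧
  ∀ a b, a ∈ Q.verts → b ∈ Q.verts → (Q.adj a b ↔ Q'.adj (e a) (e b))

/-- `e/color = π` restricted to the colors of `Q`: the map induced by `e`
on colors agrees with the label map `π`. -/
def ColorCompat (Q Q' : CQGraph) (e π : ℕ ≃ ℕ) : Prop :=
  ∀ v ∈ Q.verts, π (Q.color v) = Q'.color (e v)

/-- Structural isomorphism of parse trees via a label map `π`:
single nodes (with labels matched by `π`) are structurally isomorphic, and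
two `⊕` nodes are structurally isomorphic via `π` if there is a bijection
`γ` between their immediate significant descendants and, for each `i`, an
isomorphism `e` of the corresponding colored quotient graphs with
`e/color = π|_{color(Q_i)}` such that the subtrees are structurally
isomorphic via `e`. -/
inductive SIso : {α β : Type} → PTree α → (ℕ ≃ ℕ) → PTree β → Prop where
  | leaf {α β : Type} (v : α) (w : β) (l : ℕ) (π : ℕ ≃ ℕ) :
      SIso (PTree.leaf v l) π (PTree.leaf w (π l))
  | node {α β : Type} (π : ℕ ≃ ℕ) (cs : List (CQGraph × PTree α))
      (ds : List (CQGraph × PTree β)) (γ : Fin cs.length ≃ Fin ds.length)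
      (es : Fin cs.length → ℕ ≃ ℕ)
      (h1 : ∀ i : Fin cs.length, QIso (cs.get i).1 (ds.get (γ i)).1 (es i))
      (h2 : ∀ i : Fin cs.length,
        ColorCompat (cs.get i).1 (ds.get (γ i)).1 (es i) π)
      (h3 : ∀ i : Fin cs.length,
        SIso (cs.get i).2 (es i) (ds.get (γ i)).2) :
      SIso (PTree.node cs) π (PTree.node ds)

theorem QIso.symm' {Q Q' : CQGraph} {e : ℕ ≃ ℕ} (h : QIso Q Q' e) :
    QIso Q' Q e.symm := by
  obtain ⟨hm, ha⟩ := h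
  refine ⟨fun x => ?_, fun a b haa hbb => ?_⟩
  · rw [hm (e.symm x), Equiv.apply_symm_apply]
  · rw [ha (e.symm a) (e.symm b) ((hm _).2 (by simpa using haa))
      ((hm _).2 (by simpa using hbb)), Equiv.apply_symm_apply,
      Equiv.apply_symm_apply]

theorem QIso.trans' {Q Q' Q'' : CQGraph} {e f : ℕ ≃ ℕ}
    (h : QIso Q Q' e) (h' : QIso Q' Q'' f) : QIso Q Q'' (e.trans f) := by
  obtain ⟨hm, ha⟩ := h
  obtain ⟨hm', ha'⟩ := h'
  refine ⟨fun x => by rw [hm x, hm' (e x)]; rfl, fun a b haa hbb => ?_⟩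
  rw [ha a b haa hbb, ha' (e a) (e b) ((hm a).1 haa) ((hm b).1 hbb)]; rfl

theorem ColorCompat.symm' {Q Q' : CQGraph} {e π : ℕ ≃ ℕ}
    (hq : QIso Q Q' e) (h : ColorCompat Q Q' e π) :
    ColorCompat Q' Q e.symm π.symm := by
  intro w hw
  have hv : e.symm w ∈ Q.verts := (hq.1 _).2 (by simpa using hw)
  have := h _ hv
  rw [Equiv.apply_symm_apply] at this
  rw [← this, Equiv.symm_apply_apply]

theorem ColorCompat.trans' {Q Q' Q'' : CQGraph} {e f π π' : ℕ ≃ ℕ}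
    (hq : QIso Q Q' e) (h : ColorCompat Q Q' e π)
    (h' : ColorCompat Q' Q'' f π') :
    ColorCompat Q Q'' (e.trans f) (π.trans π') := by
  intro v hv
  have := h' (e v) ((hq.1 v).1 hv)
  simp only [Equiv.trans_apply, h v hv, this]

theorem SIso.symm' {α β : Type} {T : PTree α} {U : PTree β} {e : ℕ ≃ ℕ}
    (h : SIso T e U) : SIso U e.symm T := by
  induction h with
  | leaf v w l π =>
      have := SIso.leaf w v (π l) π.symm
      simpa using this
  | node π cs ds γ es h1 h2 h3 ih =>
      refine SIso.node π.symm ds cs γ.symm (fun j => (es (γ.symm j)).symm)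
        (fun j => ?_) (fun j => ?_) (fun j => ?_)
      · have := (h1 (γ.symm j)).symm'
        rwa [Equiv.apply_symm_apply] at this
      · have := (h2 (γ.symm j)).symm' (hq := h1 (γ.symm j))
        rwa [Equiv.apply_symm_apply] at this
      · have := ih (γ.symm j)
        rwa [Equiv.apply_symm_apply] at this

theorem SIso.trans' {α β χ : Type} {T : PTree α} {U : PTree β} {V : PTree χ}
    {e f : ℕ ≃ ℕ} (h : SIso T e U) (h' : SIso U f V) :
    SIso T (e.trans f) V := by
  induction h generalizing V f with
  | leaf v w l π =>
      cases h' with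
      | leaf _ w' _ _ =>
          have := SIso.leaf v w' l (π.trans f)
          simpa using this
  | node π cs ds γ es h1 h2 h3 ih =>
      cases h' with
      | node _ _ fs γ' es' h1' h2' h3' =>
          exact SIso.node (π.trans f) cs fs (γ.trans γ')
            (fun i => (es i).trans (es' (γ i)))
            (fun i => (h1 i).trans' (h1' (γ i)))
            (fun i => (h2 i).trans' (hq := h1 i) (h2' (γ i)))
            (fun i => ih i (h3' (γ i)))

/-- The exchange property of structural isomorphism: if `g₁, g₂` are
immediate significant descendants of a `⊕` node `g` and `h₁, h₂` of `h`,
and `T_{g₁} ≅^{π₁} T_{h₁}`, `T_{g₂} ≅^{π₂} T_{h₂}`, `T_{g₁} ≅^{π₃} T_{h₂}`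
via quotient-graph isomorphisms compatible with a common color map `π`,
then `T_{g₂} ≅^{π₁ π₃⁻¹ π₂} T_{h₁}`, and `π₁ π₃⁻¹ π₂` is an isomorphism
from `Q_{g₂}` to `Q_{h₁}` compatible with `π` on colors. -/
theorem SIso.exchange {α β : Type}
    (cs : List (CQGraph × PTree α)) (ds : List (CQGraph × PTree β))
    (Qg₁ Qg₂ Qh₁ Qh₂ : CQGraph)
    (Tg₁ Tg₂ : PTree α) (Th₁ Th₂ : PTree β)
    (hg₁ : (Qg₁, Tg₁) ∈ cs) (hg₂ : (Qg₂, Tg₂) ∈ cs)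
    (hh₁ : (Qh₁, Th₁) ∈ ds) (hh₂ : (Qh₂, Th₂) ∈ ds)
    (π π₁ π₂ π₃ : ℕ ≃ ℕ)
    (h₁ : QIso Qg₁ Qh₁ π₁ ∧ ColorCompat Qg₁ Qh₁ π₁ π ∧ SIso Tg₁ π₁ Th₁)
    (h₂ : QIso Qg₂ Qh₂ π₂ ∧ ColorCompat Qg₂ Qh₂ π₂ π ∧ SIso Tg₂ π₂ Th₂)
    (h₃ : QIso Qg₁ Qh₂ π₃ ∧ ColorCompat Qg₁ Qh₂ π₃ π ∧ SIso Tg₁ π₃ Th₂) :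
    SIso Tg₂ (π₂.trans (π₃.symm.trans π₁)) Th₁ ∧
    QIso Qg₂ Qh₁ (π₂.trans (π₃.symm.trans π₁)) ∧
    ColorCompat Qg₂ Qh₁ (π₂.trans (π₃.symm.trans π₁)) π := by
  obtain ⟨q₁, c₁, s₁⟩ := h₁
  obtain ⟨q₂, c₂, s₂⟩ := h₂
  obtain ⟨q₃, c₃, s₃⟩ := h₃
  refine ⟨s₂.trans' (s₃.symm'.trans' s₁), q₂.trans' (q₃.symm'.trans' q₁), ?_⟩
  have := c₂.trans' (hq := q₂) ((c₃.symm' q₃).trans' (hq := q₃.symm') c₁)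
  intro v hv
  simpa using this v hv
end

section
/- If two parse trees T_G and T_H are structurally isomorphic, then the graphs G and H generated by them are isomorphic. -/
/-- `x` is a vertex of the graph generated by the parse tree. -/
inductive VMem {α : Type} (x : α) : PTree α → Prop where
  | leaf (l : ℕ) : VMem x (PTree.leaf x l)
  | node (cs : List (CQGraph × PTree α)) (p : CQGraph × PTree α)
      (hp : p ∈ cs) : VMem x p.2 → VMem x (PTree.node cs)

/-- The vertex `x` has label `m` in the labeled graph generated by the
parse tree (labels are updated by the colorings of the quotient graphs). -/
inductive LabIs {α : Type} : PTree α → α → ℕ → Prop where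
  | leaf (v : α) (l : ℕ) : LabIs (PTree.leaf v l) v l
  | node (cs : List (CQGraph × PTree α)) (p : CQGraph × PTree α)
      (hp : p ∈ cs) (x : α) (m : ℕ) :
      LabIs p.2 x m → LabIs (PTree.node cs) x (p.1.color m)

/-- Adjacency in the graph generated by the parse tree: edges are either
inherited from a subtree, or created by the join operations recorded in
the colored quotient graphs. -/
inductive PAdj {α : Type} : PTree α → α → α → Prop where
  | inherit (cs : List (CQGraph × PTree α)) (p : CQGraph × PTree α)
      (hp : p ∈ cs) (x y : α) : PAdj p.2 x y → PAdj (PTree.node cs) x y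
  | new (cs : List (CQGraph × PTree α)) (p : CQGraph × PTree α)
      (hp : p ∈ cs) (x y : α) (mx my : ℕ) :
      LabIs p.2 x mx → LabIs p.2 y my → p.1.adj mx my →
      PAdj (PTree.node cs) x y

/-- Well-formedness of a parse tree: the vertex sets of the children of a
`⊕` node are pairwise disjoint, and the vertices of each stored colored
quotient graph are exactly the labels occurring in the corresponding
subtree. -/
inductive WF {α : Type} : PTree α → Prop where
  | leaf (v : α) (l : ℕ) : WF (PTree.leaf v l)
  | node (cs : List (CQGraph × PTree α))
      (hwf : ∀ p ∈ cs, WF p.2)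
      (hverts : ∀ p ∈ cs, ∀ m, (∃ x, LabIs p.2 x m) ↔ m ∈ p.1.verts)
      (hdisj : cs.Pairwise fun p q => ∀ x, ¬(VMem x p.2 ∧ VMem x q.2)) :
      WF (PTree.node cs)

/-!
Strengthen the claim to an isomorphism of the *labelled* graphs which renames every label `m`
to `π m`, and induct on the structural isomorphism. At a `⊕` node the vertices are the disjoint
union of those of the children, so the child isomorphisms glue along `γ`. An edge of the node
is either inherited from one child, and then transported by the child isomorphism, or created by
a join between labels `mx, my` of the quotient graph `Q`; these labels are carried to
`e mx, e my` in the child of the other tree, where `e : Q ≅ Q'` keeps them joined. Finally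
`e/color = π` is exactly what makes the relabelled labels `color m` correspond via `π`.
-/

section

variable {α β : Type}

theorem LabIs.vmem {T : PTree α} {x : α} {m : ℕ} (h : LabIs T x m) : VMem x T := by
  induction h with
  | leaf v l => exact .leaf l
  | node cs p hp x m _ ih => exact .node cs p hp ih

theorem PAdj.vmem {T : PTree α} {x y : α} (h : PAdj T x y) : VMem x T ∧ VMem y T := by
  induction h with
  | inherit cs p hp x y _ ih => exact ⟨.node cs p hp ih.1, .node cs p hp ih.2⟩
  | new cs p hp x y mx my hx hy _ => exact ⟨.node cs p hp hx.vmem, .node cs p hp hy.vmem⟩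

theorem VMem.exists_child {cs : List (CQGraph × PTree α)} {x : α} (h : VMem x (.node cs)) :
    ∃ i : Fin cs.length, VMem x (cs.get i).2 := by
  cases h with
  | node _ p hp h =>
    obtain ⟨i, rfl⟩ := List.mem_iff_get.mp hp
    exact ⟨i, h⟩

theorem vmem_leaf_iff {x v : α} {l : ℕ} : VMem x (.leaf v l) ↔ x = v :=
  ⟨fun h => by cases h; rfl, fun h => h ▸ .leaf l⟩

theorem labIs_leaf_iff {x v : α} {l m : ℕ} : LabIs (.leaf v l) x m ↔ x = v ∧ m = l :=
  ⟨fun h => by cases h; exact ⟨rfl, rfl⟩, by rintro ⟨rfl, rfl⟩; exact .leaf x m⟩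

theorem not_padj_leaf {x y v : α} {l : ℕ} : ¬PAdj (.leaf v l) x y := nofun

def JoinAdj (Q : CQGraph) (T : PTree α) (x y : α) : Prop :=
  ∃ mx my, LabIs T x mx ∧ LabIs T y my ∧ Q.adj mx my

theorem JoinAdj.vmem {Q : CQGraph} {T : PTree α} {x y : α} (h : JoinAdj Q T x y) :
    VMem x T ∧ VMem y T :=
  let ⟨_, _, hx, hy, _⟩ := h
  ⟨hx.vmem, hy.vmem⟩

section Node

variable {cs : List (CQGraph × PTree α)}
  (hdisj : cs.Pairwise fun p q => ∀ x, ¬(VMem x p.2 ∧ VMem x q.2))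
include hdisj

theorem eq_of_vmem_child {x : α} {i j : Fin cs.length}
    (hi : VMem x (cs.get i).2) (hj : VMem x (cs.get j).2) : i = j := by
  by_contra hne
  rcases lt_or_gt_of_ne hne with h | h
  · exact List.pairwise_iff_get.mp hdisj i j h x ⟨hi, hj⟩
  · exact List.pairwise_iff_get.mp hdisj j i h x ⟨hj, hi⟩

noncomputable def vertexSigmaEquiv :
    {x // VMem x (.node cs)} ≃ Σ i : Fin cs.length, {x // VMem x (cs.get i).2} where
  toFun x := ⟨x.2.exists_child.choose, x.1, x.2.exists_child.choose_spec⟩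
  invFun x := ⟨x.2.1, .node cs _ (List.get_mem _ _) x.2.2⟩
  left_inv _ := rfl
  right_inv := fun ⟨i, x⟩ => Sigma.subtype_ext
    (eq_of_vmem_child hdisj (VMem.exists_child (.node cs _ (List.get_mem _ i) x.2)).choose_spec x.2)
    rfl

theorem padj_node_iff {x y : α} {i j : Fin cs.length}
    (hx : VMem x (cs.get i).2) (hy : VMem y (cs.get j).2) :
    PAdj (.node cs) x y ↔
      i = j ∧ (PAdj (cs.get i).2 x y ∨ JoinAdj (cs.get i).1 (cs.get i).2 x y) := by
  constructor
  · intro h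
    have hchild : ∃ k : Fin cs.length,
        PAdj (cs.get k).2 x y ∨ JoinAdj (cs.get k).1 (cs.get k).2 x y := by
      cases h with
      | inherit _ p hp _ _ h =>
        obtain ⟨k, rfl⟩ := List.mem_iff_get.mp hp
        exact ⟨k, .inl h⟩
      | new _ p hp _ _ mx my hmx hmy hadj =>
        obtain ⟨k, rfl⟩ := List.mem_iff_get.mp hp
        exact ⟨k, .inr ⟨mx, my, hmx, hmy, hadj⟩⟩
    obtain ⟨k, hk⟩ := hchild
    have hvk := hk.elim PAdj.vmem JoinAdj.vmem
    obtain rfl := eq_of_vmem_child hdisj hx hvk.1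
    obtain rfl := eq_of_vmem_child hdisj hy hvk.2
    exact ⟨rfl, hk⟩
  · rintro ⟨rfl, h | ⟨mx, my, hmx, hmy, hadj⟩⟩
    · exact .inherit cs _ (List.get_mem _ _) x y h
    · exact .new cs _ (List.get_mem _ _) x y mx my hmx hmy hadj

theorem labIs_node_iff {x : α} {i : Fin cs.length} (hx : VMem x (cs.get i).2) {m : ℕ} :
    LabIs (.node cs) x m ↔ ∃ m₀, LabIs (cs.get i).2 x m₀ ∧ (cs.get i).1.color m₀ = m := by
  constructor
  · intro h
    cases h with
    | node _ p hp _ m₀ h =>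
      obtain ⟨k, rfl⟩ := List.mem_iff_get.mp hp
      obtain rfl := eq_of_vmem_child hdisj hx h.vmem
      exact ⟨m₀, h, rfl⟩
  · rintro ⟨m₀, h, rfl⟩
    exact .node cs _ (List.get_mem _ _) x m₀ h

end Node

structure LabelledIso (T : PTree α) (π : ℕ ≃ ℕ) (T' : PTree β) where
  toEquiv : {x // VMem x T} ≃ {y // VMem y T'}
  padj_iff : ∀ x y, PAdj T x.1 y.1 ↔ PAdj T' (toEquiv x).1 (toEquiv y).1
  labIs_iff : ∀ x m, LabIs T x.1 m ↔ LabIs T' (toEquiv x).1 (π m)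

namespace LabelledIso

def leaf (v : α) (w : β) (l : ℕ) (π : ℕ ≃ ℕ) : LabelledIso (.leaf v l) π (.leaf w (π l)) where
  toEquiv :=
    { toFun := fun _ => ⟨w, .leaf _⟩
      invFun := fun _ => ⟨v, .leaf _⟩
      left_inv := fun x => Subtype.ext (vmem_leaf_iff.mp x.2).symm
      right_inv := fun y => Subtype.ext (vmem_leaf_iff.mp y.2).symm }
  padj_iff _ _ := iff_of_false not_padj_leaf not_padj_leaf
  labIs_iff x m := by simp [labIs_leaf_iff, vmem_leaf_iff.mp x.2]

section Child

variable {T : PTree α} {T' : PTree β} {e π : ℕ ≃ ℕ} (E : LabelledIso T e T') {Q Q' : CQGraph}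
  (hverts : ∀ x m, LabIs T x m → m ∈ Q.verts)
include hverts

theorem joinAdj_iff (hQ : QIso Q Q' e) (x y : {x // VMem x T}) :
    JoinAdj Q T x.1 y.1 ↔ JoinAdj Q' T' (E.toEquiv x).1 (E.toEquiv y).1 := by
  constructor
  · rintro ⟨mx, my, hmx, hmy, hadj⟩
    exact ⟨e mx, e my, (E.labIs_iff x mx).mp hmx, (E.labIs_iff y my).mp hmy,
      (hQ.2 mx my (hverts _ _ hmx) (hverts _ _ hmy)).mp hadj⟩
  · rintro ⟨mx, my, hmx, hmy, hadj⟩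
    rw [← e.apply_symm_apply mx, ← E.labIs_iff] at hmx
    rw [← e.apply_symm_apply my, ← E.labIs_iff] at hmy
    rw [← e.apply_symm_apply mx, ← e.apply_symm_apply my] at hadj
    exact ⟨_, _, hmx, hmy, (hQ.2 _ _ (hverts _ _ hmx) (hverts _ _ hmy)).mpr hadj⟩

theorem exists_color_iff (hc : ColorCompat Q Q' e π) (x : {x // VMem x T}) (m : ℕ) :
    (∃ m₀, LabIs T x.1 m₀ ∧ Q.color m₀ = m) ↔
      ∃ m₀, LabIs T' (E.toEquiv x).1 m₀ ∧ Q'.color m₀ = π m := by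
  constructor
  · rintro ⟨m₀, hm₀, rfl⟩
    exact ⟨e m₀, (E.labIs_iff x m₀).mp hm₀, (hc m₀ (hverts _ _ hm₀)).symm⟩
  · rintro ⟨m₀, hm₀, hcolor⟩
    rw [← e.apply_symm_apply m₀, ← E.labIs_iff] at hm₀
    refine ⟨_, hm₀, π.injective ?_⟩
    rw [hc _ (hverts _ _ hm₀), e.apply_symm_apply, hcolor]

end Child

noncomputable def node {π : ℕ ≃ ℕ} {cs : List (CQGraph × PTree α)}
    {ds : List (CQGraph × PTree β)}
    (hdisj : cs.Pairwise fun p q => ∀ x, ¬(VMem x p.2 ∧ VMem x q.2))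
    (hdisj' : ds.Pairwise fun p q => ∀ y, ¬(VMem y p.2 ∧ VMem y q.2))
    (hverts : ∀ i : Fin cs.length, ∀ x m, LabIs (cs.get i).2 x m → m ∈ (cs.get i).1.verts)
    (γ : Fin cs.length ≃ Fin ds.length) (es : Fin cs.length → ℕ ≃ ℕ)
    (hQ : ∀ i, QIso (cs.get i).1 (ds.get (γ i)).1 (es i))
    (hc : ∀ i, ColorCompat (cs.get i).1 (ds.get (γ i)).1 (es i) π)
    (E : ∀ i, LabelledIso (cs.get i).2 (es i) (ds.get (γ i)).2) :
    LabelledIso (.node cs) π (.node ds) where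
  toEquiv := (vertexSigmaEquiv hdisj).trans
    ((Equiv.sigmaCongr γ fun i => (E i).toEquiv).trans (vertexSigmaEquiv hdisj').symm)
  padj_iff x y := by
    obtain ⟨⟨i, x⟩, rfl⟩ := (vertexSigmaEquiv hdisj).symm.surjective x
    obtain ⟨⟨j, y⟩, rfl⟩ := (vertexSigmaEquiv hdisj).symm.surjective y
    simp only [Equiv.trans_apply, Equiv.apply_symm_apply]
    change PAdj _ x.1 y.1 ↔ PAdj _ ((E i).toEquiv x).1 ((E j).toEquiv y).1
    rw [padj_node_iff hdisj x.2 y.2, padj_node_iff hdisj' ((E i).toEquiv x).2 ((E j).toEquiv y).2,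
      γ.injective.eq_iff]
    by_cases hij : i = j
    · subst hij
      exact and_congr Iff.rfl
        (or_congr ((E i).padj_iff x y) ((E i).joinAdj_iff (hverts i) (hQ i) x y))
    · exact iff_of_false (fun h => hij h.1) (fun h => hij h.1)
  labIs_iff x m := by
    obtain ⟨⟨i, x⟩, rfl⟩ := (vertexSigmaEquiv hdisj).symm.surjective x
    simp only [Equiv.trans_apply, Equiv.apply_symm_apply]
    change LabIs _ x.1 m ↔ LabIs _ ((E i).toEquiv x).1 (π m)
    rw [labIs_node_iff hdisj x.2, labIs_node_iff hdisj' ((E i).toEquiv x).2]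
    exact (E i).exists_color_iff (hverts i) (hc i) x m

end LabelledIso

theorem SIso.nonempty_labelledIso {T : PTree α} {π : ℕ ≃ ℕ} {T' : PTree β}
    (h : SIso T π T') (hT : WF T) (hT' : WF T') : Nonempty (LabelledIso T π T') := by
  induction h with
  | leaf v w l π => exact ⟨.leaf v w l π⟩
  | node π cs ds γ es hQ hc _ ih =>
    cases hT with | node _ hwf hverts hdisj =>
    cases hT' with | node _ hwf' _ hdisj' =>
    exact ⟨.node hdisj hdisj' (fun i x m hm => (hverts _ (List.get_mem _ _) m).mp ⟨x, hm⟩) γ es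
      hQ hc fun i => (ih i (hwf _ (List.get_mem _ _)) (hwf' _ (List.get_mem _ _))).some⟩

end

/-- If two (well-formed) parse trees are structurally isomorphic, then the
graphs generated by them are isomorphic. -/
theorem SIso.graphs_isomorphic {α β : Type}
    (T_G : PTree α) (T_H : PTree β) (π : ℕ ≃ ℕ)
    (hG : WF T_G) (hH : WF T_H) (h : SIso T_G π T_H) :
    ∃ f : {x : α // VMem x T_G} → {y : β // VMem y T_H},
      Function.Bijective f ∧
      ∀ x y : {x : α // VMem x T_G},
        PAdj T_G x.1 y.1 ↔ PAdj T_H (f x).1 (f y).1 := by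
  obtain ⟨E⟩ := h.nonempty_labelledIso hG hH
  exact ⟨E.toEquiv, E.toEquiv.bijective, E.padj_iff⟩
end
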